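/- Every F₂-linear subspace C ⊆ F₄⁵ with dim_{F₂} C = 4 (i.e., a (5, 2⁴) additive code) whose nonzero elements all have Hamming weight at least 4 is trace self-orthogonal: C ⊆ C^{⊥t}. -/
import Mathlib


noncomputable section

abbrev F2 : Type := ZMod 2
abbrev F4 : Type := GaloisField 2 2

/-- The trace inner product `(u, v)ₜ = Σⱼ (uⱼ vⱼ² + uⱼ² vⱼ)` on `F₄ⁿ`. -/
def trInner {n : ℕ} (u v : Fin n → F4) : F4 :=
  ∑ j, (u j * (v j) ^ 2 + (u j) ^ 2 * v j)

/-- The Hamming weight of `u ∈ F₄ⁿ`: the number of nonzero coordinates. -/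
def wt {n : ℕ} (u : Fin n → F4) : ℕ := Set.ncard {i | u i ≠ 0}

instance : Fintype F4 := Fintype.ofFinite F4

lemma F4card : Fintype.card F4 = 4 := by
  have := GaloisField.card 2 (n := 2) (by norm_num)
  simpa [Nat.card_eq_fintype_card] using this

lemma two_eq_zero : (2 : F4) = 0 := by
  have h := CharP.cast_eq_zero F4 2
  simpa using h

lemma cube_of_ne_zero {a : F4} (h : a ≠ 0) : a ^ 3 = 1 := by
  have := FiniteField.pow_card_sub_one_eq_one a h
  rwa [F4card] at this

lemma key_identity (a b : F4) :
    a * b ^ 2 + a ^ 2 * b = a ^ 3 + b ^ 3 + (a + b) ^ 3 := by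
  linear_combination (-(a^3 + b^3 + a^2*b + a*b^2)) * two_eq_zero

open Finset in
lemma wt_eq {n : ℕ} (u : Fin n → F4) [DecidableEq F4] :
    wt u = (Finset.univ.filter (fun i => u i ≠ 0)).card := by
  rw [wt, Set.ncard_eq_toFinset_card', Set.toFinset_setOf]

open Finset in
lemma sum_cube {n : ℕ} (u : Fin n → F4) : ∑ j, (u j) ^ 3 = (wt u : F4) := by
  classical
  rw [wt_eq, Finset.card_filter, Nat.cast_sum]
  apply Finset.sum_congr rfl
  intro j _
  by_cases h : u j = 0
  · simp [h]
  · simp [h, cube_of_ne_zero h]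

lemma wt_le {n : ℕ} (u : Fin n → F4) : wt u ≤ n := by
  classical
  rw [wt_eq]
  have h := Finset.card_filter_le (Finset.univ : Finset (Fin n)) (fun i => u i ≠ 0)
  simpa using h

/-- every `(5, 2⁴)` additive code over `F₄` whose nonzero elements all have
Hamming weight at least 4 is trace self-orthogonal. -/
theorem stmt13 (C : Submodule F2 (Fin 5 → F4)) (hdim : Module.finrank F2 C = 4)
    (hwt : ∀ x ∈ C, x ≠ 0 → 4 ≤ wt x) :
    ∀ u ∈ C, ∀ v ∈ C, trInner u v = 0 := by
  classical
  set Cf : Finset (Fin 5 → F4) := Finset.univ.filter (· ∈ C) with hCf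
  have hmemCf : ∀ x, x ∈ Cf ↔ x ∈ C := by
    intro x; simp [hCf]
  -- card of C
  have hcardC : Cf.card = 16 := by
    have h1 : Fintype.card C = Fintype.card F2 ^ Module.finrank F2 C :=
      Module.card_eq_pow_finrank
    rw [hdim] at h1
    have h2 : Fintype.card F2 = 2 := by simp [ZMod.card]
    rw [h2] at h1
    have h3 : Fintype.card C = Cf.card := by
      rw [hCf]; exact Fintype.card_subtype _
    rw [← h3, h1]; norm_num
  -- per-coordinate bound
  have hcoord : ∀ j : Fin 5, (Cf.filter (fun x => x j ≠ 0)).card ≤ 12 := by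
    intro j
    set ψ : C →ₗ[F2] F4 := (LinearMap.proj j).comp C.subtype with hψ
    have hrn : Module.finrank F2 (LinearMap.range ψ) +
        Module.finrank F2 (LinearMap.ker ψ) = 4 := by
      rw [LinearMap.finrank_range_add_finrank_ker ψ, hdim]
    have hrange : Module.finrank F2 (LinearMap.range ψ) ≤ 2 := by
      have := Submodule.finrank_le (LinearMap.range ψ)
      rwa [GaloisField.finrank 2 (by norm_num)] at this
    have hker : 2 ≤ Module.finrank F2 (LinearMap.ker ψ) := by omega
    have hkercard : 4 ≤ Fintype.card (LinearMap.ker ψ) := by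
      have h1 : Fintype.card (LinearMap.ker ψ) =
          Fintype.card F2 ^ Module.finrank F2 (LinearMap.ker ψ) :=
        Module.card_eq_pow_finrank
      have h2 : Fintype.card F2 = 2 := by simp [ZMod.card]
      rw [h2] at h1
      calc 4 = 2 ^ 2 := by norm_num
        _ ≤ 2 ^ Module.finrank F2 (LinearMap.ker ψ) :=
          Nat.pow_le_pow_right (by norm_num) hker
        _ = Fintype.card (LinearMap.ker ψ) := h1.symm
    have hzerocard : (Cf.filter (fun x => x j = 0)).card =
        Fintype.card (LinearMap.ker ψ) := by
      have e : {x : Fin 5 → F4 // x ∈ C ∧ x j = 0} ≃ LinearMap.ker ψ :=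
        { toFun := fun x => ⟨⟨x.1, x.2.1⟩, x.2.2⟩
          invFun := fun y => ⟨y.1.1, y.1.2, y.2⟩
          left_inv := fun x => rfl
          right_inv := fun y => rfl }
      rw [← Fintype.card_congr e, Fintype.card_subtype, hCf, Finset.filter_filter]
    have hsplit : (Cf.filter (fun x => ¬ x j = 0)).card =
        Cf.card - (Cf.filter (fun x => x j = 0)).card := by
      rw [Finset.filter_not, Finset.card_sdiff_of_subset (Finset.filter_subset _ _)]
    have h4 : 4 ≤ (Cf.filter (fun x => x j = 0)).card := by
      rw [hzerocard]; exact hkercard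
    have h12 : (Cf.filter (fun x => ¬ x j = 0)).card ≤ 12 := by
      rw [hsplit, hcardC]
      exact (Nat.sub_le_sub_left h4 16).trans (by norm_num)
    simpa using h12
  -- sum of weights over code
  have hsum_le : ∑ x ∈ Cf, wt x ≤ 60 := by
    have hswap : ∑ x ∈ Cf, wt x =
        ∑ j : Fin 5, (Cf.filter (fun x => x j ≠ 0)).card := by
      have : ∀ x ∈ Cf, wt x = ∑ j : Fin 5, (if x j ≠ 0 then 1 else 0) := by
        intro x _
        rw [wt_eq, Finset.card_filter]
      rw [Finset.sum_congr rfl this, Finset.sum_comm]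
      apply Finset.sum_congr rfl
      intro j _
      rw [Finset.card_filter]
    rw [hswap]
    calc ∑ j : Fin 5, (Cf.filter (fun x => x j ≠ 0)).card
        ≤ ∑ _j : Fin 5, 12 := Finset.sum_le_sum (fun j _ => hcoord j)
      _ = 60 := by simp
  clear hcoord
  -- no codeword of weight 5
  have hno5 : ∀ x ∈ C, wt x ≠ 5 := by
    intro x0 hx0 hwt5
    have hx0ne : x0 ≠ 0 := by
      intro h; rw [h] at hwt5; simp [wt] at hwt5
    have h0C : (0 : Fin 5 → F4) ∈ Cf := (hmemCf 0).mpr C.zero_mem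
    have hx0Cf : x0 ∈ Cf := (hmemCf x0).mpr hx0
    set D := Cf.erase 0 with hD
    have hx0D : x0 ∈ D := Finset.mem_erase.mpr ⟨hx0ne, hx0Cf⟩
    have hDcard : D.card = 15 := by
      rw [hD, Finset.card_erase_of_mem h0C, hcardC]
    have hsplit1 : wt 0 + ∑ x ∈ D, wt x = ∑ x ∈ Cf, wt x :=
      Finset.add_sum_erase Cf wt h0C
    have hwt0 : wt (0 : Fin 5 → F4) = 0 := by simp [wt]
    have hsplit2 : wt x0 + ∑ x ∈ D.erase x0, wt x = ∑ x ∈ D, wt x :=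
      Finset.add_sum_erase D wt hx0D
    have hDx0card : (D.erase x0).card = 14 := by
      rw [Finset.card_erase_of_mem hx0D, hDcard]
    have hrest : 4 * 14 ≤ ∑ x ∈ D.erase x0, wt x := by
      have : ∀ x ∈ D.erase x0, 4 ≤ wt x := by
        intro x hx
        have hxD : x ∈ D := Finset.mem_of_mem_erase hx
        have hxne : x ≠ 0 := (Finset.mem_erase.mp hxD).1
        exact hwt x ((hmemCf x).mp (Finset.mem_of_mem_erase hxD)) hxne
      calc 4 * 14 = (D.erase x0).card • 4 := by rw [hDx0card]; simp [mul_comm]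
        _ ≤ ∑ x ∈ D.erase x0, wt x := Finset.card_nsmul_le_sum _ _ _ this
    omega
  -- all codewords have weight 0 or 4, so cast to F4 is 0
  have hfour : (4 : F4) = 0 := by
    linear_combination 2 * two_eq_zero
  have hcast : ∀ x ∈ C, ((wt x : ℕ) : F4) = 0 := by
    intro x hx
    by_cases hxz : x = 0
    · simp [hxz, wt]
    · have h1 := hwt x hx hxz
      have h2 := wt_le x
      have h3 := hno5 x hx
      have : wt x = 4 := by omega
      rw [this]
      simpa using hfour
  -- conclude
  intro u hu v hv
  have huv : u + v ∈ C := C.add_mem hu hv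
  have : trInner u v = (wt u : F4) + (wt v : F4) + (wt (u + v) : F4) := by
    rw [trInner]
    have : ∀ j : Fin 5, u j * (v j) ^ 2 + (u j) ^ 2 * v j =
        (u j) ^ 3 + (v j) ^ 3 + ((u + v) j) ^ 3 := by
      intro j
      simpa [Pi.add_apply] using key_identity (u j) (v j)
    rw [Finset.sum_congr rfl (fun j _ => this j)]
    rw [Finset.sum_add_distrib, Finset.sum_add_distrib, sum_cube, sum_cube, sum_cube]
  rw [this, hcast u hu, hcast v hv, hcast _ huv]
  simp
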